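/- Let u ∈ ℝ³ be a unit vector and set Q := s₊(u⊗u − (1/3)I), a real 3×3 matrix. Then Q is symmetric, tr(Q) = 0, tr(Q²) = (2/3)s₊², tr(Q³) = (2/9)s₊³, and g_B(Q) = 0 (the zero matrix). -/

import Mathlib

open Matrix

/-- `s₊ = (b + √(b² + 24ac)) / (4c)`. -/
noncomputable def sPlus (a b c : ℝ) : ℝ :=
  (b + Real.sqrt (b ^ 2 + 24 * a * c)) / (4 * c)

/-- `g_B(Q) = aQ + b(Q² − (1/3)tr(Q²)·I) − c·Q·tr(Q²)`. -/
noncomputable def gB (a b c : ℝ) (Q : Matrix (Fin 3) (Fin 3) ℝ) :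
    Matrix (Fin 3) (Fin 3) ℝ :=
  a • Q + b • (Q * Q - ((Q * Q).trace / 3) • (1 : Matrix (Fin 3) (Fin 3) ℝ))
    - (c * (Q * Q).trace) • Q

/-- For a unit vector `u ∈ ℝ³` and `Q = s₊(u⊗u − (1/3)I)`, the matrix `Q` is
symmetric, traceless, `tr(Q²) = (2/3)s₊²`, `tr(Q³) = (2/9)s₊³`, and `g_B(Q) = 0`. -/
theorem uniaxial_Q_properties (a b c : ℝ) (ha : 0 < a) (hb : 0 < b) (hc : 0 < c)
    (u : Fin 3 → ℝ) (hu : ∑ i, u i ^ 2 = 1)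
    (Q : Matrix (Fin 3) (Fin 3) ℝ)
    (hQ : Q = sPlus a b c •
      (Matrix.of (fun i j => u i * u j) - (1 / 3 : ℝ) • (1 : Matrix (Fin 3) (Fin 3) ℝ))) :
    Qᵀ = Q ∧ Q.trace = 0 ∧
    (Q * Q).trace = 2 / 3 * (sPlus a b c) ^ 2 ∧
    (Q * Q * Q).trace = 2 / 9 * (sPlus a b c) ^ 3 ∧
    gB a b c Q = 0 := by
  set s := sPlus a b c with hsdef
  set P : Matrix (Fin 3) (Fin 3) ℝ := Matrix.of (fun i j => u i * u j) with hPdef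
  set A : Matrix (Fin 3) (Fin 3) ℝ := P - (1 / 3 : ℝ) • 1 with hAdef
  -- the scalar identity satisfied by s
  have hD : (0:ℝ) ≤ b ^ 2 + 24 * a * c := by positivity
  have hsq := Real.sq_sqrt hD
  have hs : 2 * c * s ^ 2 = b * s + 3 * a := by
    have h4c : (4 * c) ≠ 0 := by positivity
    rw [hsdef, sPlus]
    field_simp
    rw [show b ^ 2 + c * 24 * a = b ^ 2 + 24 * a * c by ring]
    nlinarith [hsq]
  have hu' : ∑ i, u i ^ 2 = 1 := hu
  simp only [Fin.sum_univ_three] at hu'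
  -- P is idempotent with trace 1
  have hP2 : P * P = P := by
    ext i j
    simp only [hPdef, Matrix.mul_apply, Fin.sum_univ_three, Matrix.of_apply]
    linear_combination (u i * u j) * hu'
  have htrP : P.trace = 1 := by
    simp only [hPdef, Matrix.trace, Fin.sum_univ_three, Matrix.diag_apply, Matrix.of_apply]
    linear_combination hu'
  -- A facts
  have htrA : A.trace = 0 := by
    rw [hAdef, Matrix.trace_sub, Matrix.trace_smul, htrP, Matrix.trace_one]
    norm_num
  have hA2 : A * A = (1/3 : ℝ) • A + (2/9 : ℝ) • (1 : Matrix (Fin 3) (Fin 3) ℝ) := by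
    rw [hAdef]
    rw [sub_mul, mul_sub, mul_sub, hP2]
    simp only [Matrix.smul_mul, Matrix.mul_smul, Matrix.one_mul, Matrix.mul_one, smul_sub,
      smul_smul]
    module
  have hQQ : Q * Q = (s^2/3 : ℝ) • A + (2*s^2/9 : ℝ) • (1 : Matrix (Fin 3) (Fin 3) ℝ) := by
    rw [hQ]
    rw [Matrix.smul_mul, Matrix.mul_smul, hA2]
    match_scalars <;> ring
  have htrQQ : (Q * Q).trace = 2 / 3 * s ^ 2 := by
    rw [hQQ]
    rw [Matrix.trace_add, Matrix.trace_smul, Matrix.trace_smul, htrA, Matrix.trace_one]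
    simp; ring
  refine ⟨?_, ?_, htrQQ, ?_, ?_⟩
  · have hAsym : Aᵀ = A := by
      ext i j
      simp only [Matrix.transpose_apply, hAdef, Matrix.sub_apply, Matrix.smul_apply,
        hPdef, Matrix.of_apply, Matrix.one_apply, smul_eq_mul]
      by_cases h : i = j
      · subst h; ring
      · rw [if_neg h, if_neg (Ne.symm h)]; ring
    rw [hQ, Matrix.transpose_smul, hAsym]
  · rw [hQ, Matrix.trace_smul, htrA, smul_zero]
  · have hQQQ : Q * Q * Q = (s^3/3 : ℝ) • A + (2*s^3/27 : ℝ) • (1 : Matrix (Fin 3) (Fin 3) ℝ) := by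
      rw [hQQ, hQ]
      rw [add_mul, Matrix.smul_mul, Matrix.smul_mul, Matrix.mul_smul, Matrix.mul_smul, hA2,
        Matrix.one_mul]
      match_scalars <;> ring
    rw [hQQQ, Matrix.trace_add, Matrix.trace_smul, Matrix.trace_smul, htrA, Matrix.trace_one]
    simp; ring
  · rw [gB, htrQQ, hQQ, hQ]
    match_scalars
    · linear_combination (-(s / 3)) * hs
    · linear_combination (s / 9) * hs
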